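/- Let $1<p<\infty$, $\ell>0$ and $F:\mathbb{R}^{N\times n}\to\mathbb{R}$ be $C^1$ with $\xi\mapsto F(\xi)-\ell|\xi|^p$ convex. Then there exists $c=c(p)\ell>0$ such that the strong $p$-monotonicity inequality $\langle F'(\xi)-F'(\eta),\xi-\eta\rangle \ge c\,(|\xi|^2+|\eta|^2)^{(p-2)/2}|\xi-\eta|^2$ holds for all $\xi,\eta\in\mathbb{R}^{N\times n}$ (with the convention that the right-hand side is $0$ when $\xi=\eta=0$). -/

import Mathlib

/-!
Since `F - ℓ‖·‖^p` is convex and differentiable, its derivative is monotone; as the gradient of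
`‖·‖^p` is `p ‖x‖^(p-2) x`, this gives
`⟪∇F ξ - ∇F η, ξ - η⟫ ≥ ℓ p ⟪‖ξ‖^(p-2) ξ - ‖η‖^(p-2) η, ξ - η⟫`.
For `A = ‖ξ‖ ≥ B = ‖η‖`, the last inner product and `(A² + B²)^((p-2)/2) ‖ξ - η‖²` are both affine
in `t = ⟪ξ, η⟫ ∈ [-AB, AB]`, so they only need to be compared at `t = ±AB`. There the comparison
follows from `A^(p-1) - B^(p-1) ≥ min 1 (p-1) A^(p-2) (A - B)` (a Bernoulli inequality) and from
`(A² + B²)^((p-2)/2) ≤ max 1 (2^((p-2)/2)) A^(p-2)`.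
-/

open scoped RealInnerProductSpace
open Real

theorem ConvexOn.fderiv_sub_fderiv_apply_sub_nonneg {E : Type*} [NormedAddCommGroup E]
    [NormedSpace ℝ E] {f : E → ℝ} {s : Set E} {x y : E} {f'x f'y : E →L[ℝ] ℝ}
    (hf : ConvexOn ℝ s f) (hx : x ∈ s) (hy : y ∈ s)
    (hfx : HasFDerivAt f f'x x) (hfy : HasFDerivAt f f'y y) :
    0 ≤ (f'x - f'y) (x - y) := by
  set L : ℝ →ᵃ[ℝ] E := AffineMap.lineMap y x
  have hconv : ConvexOn ℝ (L ⁻¹' s) (f ∘ L) := hf.comp_affineMap L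
  have h0 : (0 : ℝ) ∈ L ⁻¹' s := by simpa [L] using hy
  have h1 : (1 : ℝ) ∈ L ⁻¹' s := by simpa [L] using hx
  have hd0 : HasDerivAt (f ∘ L) (f'y (x - y)) 0 :=
    (by simpa [L] using hfy : HasFDerivAt f f'y (L 0)).comp_hasDerivAt 0
      AffineMap.hasDerivAt_lineMap
  have hd1 : HasDerivAt (f ∘ L) (f'x (x - y)) 1 :=
    (by simpa [L] using hfx : HasFDerivAt f f'x (L 1)).comp_hasDerivAt 1
      AffineMap.hasDerivAt_lineMap
  have := (hconv.le_slope_of_hasDerivAt h0 h1 one_pos hd0).trans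
    (hconv.slope_le_of_hasDerivAt h0 h1 one_pos hd1)
  simpa using this

theorem Real.mul_one_sub_le_one_sub_rpow {p s : ℝ} (hp : 1 ≤ p) (hs0 : 0 ≤ s) (hs1 : s ≤ 1) :
    min 1 (p - 1) * (1 - s) ≤ 1 - s ^ (p - 1) := by
  rcases le_or_gt p 2 with hp2 | hp2
  · have hb := rpow_one_add_le_one_add_mul_self (s := s - 1) (by linarith) (p := p - 1)
      (by linarith) (by linarith)
    rw [add_sub_cancel] at hb
    nlinarith [min_le_right 1 (p - 1)]
  · have hs : s ^ (p - 1) ≤ s := by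
      simpa using rpow_le_rpow_of_exponent_ge' hs0 hs1 zero_le_one (by linarith : 1 ≤ p - 1)
    nlinarith [min_le_left 1 (p - 1)]

theorem Real.mul_rpow_mul_sub_le_rpow_sub_rpow {p A B : ℝ} (hp : 1 ≤ p) (hB : 0 ≤ B)
    (hBA : B ≤ A) : min 1 (p - 1) * A ^ (p - 2) * (A - B) ≤ A ^ (p - 1) - B ^ (p - 1) := by
  rcases (hB.trans hBA).eq_or_lt with rfl | hA
  · simp [le_antisymm hBA hB]
  have hs := mul_one_sub_le_one_sub_rpow hp (div_nonneg hB hA.le) ((div_le_one hA).2 hBA)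
  have hAp : A ^ (p - 1) = A ^ (p - 2) * A := by
    rw [← rpow_add_one hA.ne']; ring_nf
  rw [div_rpow hB hA.le] at hs
  calc min 1 (p - 1) * A ^ (p - 2) * (A - B)
      = A ^ (p - 1) * (min 1 (p - 1) * (1 - B / A)) := by rw [hAp]; field_simp
    _ ≤ A ^ (p - 1) * (1 - B ^ (p - 1) / A ^ (p - 1)) := by gcongr
    _ = A ^ (p - 1) - B ^ (p - 1) := by field_simp

noncomputable def strongMonotonicityConst (p : ℝ) : ℝ :=
  min 1 (p - 1) / (2 * max 1 (2 ^ ((p - 2) / 2)))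

theorem strongMonotonicityConst_pos {p : ℝ} (hp : 1 < p) : 0 < strongMonotonicityConst p := by
  have : 0 < max 1 ((2 : ℝ) ^ ((p - 2) / 2)) := lt_max_of_lt_left one_pos
  unfold strongMonotonicityConst
  have : 0 < min 1 (p - 1) := lt_min one_pos (by linarith)
  positivity

theorem strongMonotonicityConst_mul_rpow_le {p A B : ℝ} (hp : 1 ≤ p) (hA : 0 < A) (hB : 0 ≤ B)
    (hBA : B ≤ A) :
    strongMonotonicityConst p * (A ^ 2 + B ^ 2) ^ ((p - 2) / 2)
      ≤ min 1 (p - 1) * A ^ (p - 2) / 2 := by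
  set M := max 1 ((2 : ℝ) ^ ((p - 2) / 2))
  have hM : 0 < M := lt_max_of_lt_left one_pos
  have hA2 : (A ^ 2) ^ ((p - 2) / 2) = A ^ (p - 2) := by
    rw [← rpow_natCast, ← rpow_mul hA.le]; ring_nf
  have hR : (A ^ 2 + B ^ 2) ^ ((p - 2) / 2) ≤ M * A ^ (p - 2) := by
    rcases le_or_gt p 2 with hp2 | hp2
    · calc (A ^ 2 + B ^ 2) ^ ((p - 2) / 2) ≤ (A ^ 2) ^ ((p - 2) / 2) :=
            rpow_le_rpow_of_nonpos (by positivity) (by nlinarith) (by linarith)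
        _ ≤ M * A ^ (p - 2) := by
            rw [hA2]; exact le_mul_of_one_le_left (by positivity) (le_max_left _ _)
    · calc (A ^ 2 + B ^ 2) ^ ((p - 2) / 2) ≤ (2 * A ^ 2) ^ ((p - 2) / 2) :=
            rpow_le_rpow (by positivity) (by nlinarith) (by linarith)
        _ ≤ M * A ^ (p - 2) := by
            rw [mul_rpow zero_le_two (by positivity), hA2]
            gcongr; exact le_max_right _ _
  have hm : 0 ≤ min 1 (p - 1) := le_min zero_le_one (by linarith)
  calc strongMonotonicityConst p * (A ^ 2 + B ^ 2) ^ ((p - 2) / 2)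
      ≤ min 1 (p - 1) / (2 * M) * (M * A ^ (p - 2)) := by
        unfold strongMonotonicityConst; gcongr
    _ = min 1 (p - 1) * A ^ (p - 2) / 2 := by field_simp

theorem mul_le_of_abs_le_of_mul_le_of_neg_mul_le {α β t K : ℝ} (ht : |t| ≤ K)
    (h₁ : β * K ≤ α) (h₂ : -β * K ≤ α) : β * t ≤ α := by
  rcases le_total 0 β with hβ | hβ
  · nlinarith [le_abs_self t]
  · nlinarith [neg_abs_le t]

theorem strongMonotonicityConst_mul_le_of_abs_le {p A B t : ℝ} (hp : 1 < p) (hB : 0 ≤ B)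
    (hBA : B ≤ A) (ht : |t| ≤ A * B) :
    strongMonotonicityConst p * ((A ^ 2 + B ^ 2) ^ ((p - 2) / 2) * (A ^ 2 + B ^ 2 - 2 * t))
      ≤ A ^ (p - 2) * (A ^ 2 - t) + B ^ (p - 2) * (B ^ 2 - t) := by
  rcases (hB.trans hBA).eq_or_lt with rfl | hA
  · obtain rfl : B = 0 := le_antisymm hBA hB
    obtain rfl : t = 0 := abs_nonpos_iff.1 (by simpa using ht)
    simp
  set m := min 1 (p - 1)
  set u := A ^ (p - 2)
  set v := B ^ (p - 2)
  set cR := strongMonotonicityConst p * (A ^ 2 + B ^ 2) ^ ((p - 2) / 2)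
  have hcR : cR ≤ m * u / 2 := strongMonotonicityConst_mul_rpow_le hp.le hA hB hBA
  have hm : 0 ≤ m := le_min zero_le_one (by linarith)
  have hm1 : m ≤ 1 := min_le_left _ _
  have hu : 0 ≤ u := rpow_nonneg hA.le _
  have hv : 0 ≤ v := rpow_nonneg hB _
  have huA : u * A = A ^ (p - 1) := by
    rw [← rpow_add_one' hA.le (by linarith)]; ring_nf
  have hvB : v * B = B ^ (p - 1) := by
    rw [← rpow_add_one' hB (by linarith)]; ring_nf
  have hdiff : m * u * (A - B) ≤ u * A - v * B := by
    rw [huA, hvB]; exact mul_rpow_mul_sub_le_rpow_sub_rpow hp.le hB hBA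
  have hnear : cR * (A - B) ^ 2 ≤ (u * A - v * B) * (A - B) := by
    have hAB : 0 ≤ A - B := sub_nonneg.2 hBA
    calc cR * (A - B) ^ 2 ≤ m * u / 2 * (A - B) ^ 2 := by gcongr
      _ ≤ m * u * (A - B) * (A - B) := by nlinarith [mul_nonneg (mul_nonneg hm hu) hAB]
      _ ≤ (u * A - v * B) * (A - B) := by gcongr
  have hfar : cR * (A + B) ^ 2 ≤ (u * A + v * B) * (A + B) := by
    calc cR * (A + B) ^ 2 ≤ u / 2 * (A + B) ^ 2 := by gcongr; nlinarith
      _ ≤ u * A * (A + B) := by nlinarith [mul_nonneg hu (sub_nonneg.2 hBA)]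
      _ ≤ (u * A + v * B) * (A + B) := by gcongr; nlinarith [mul_nonneg hv hB]
  -- `hnear` and `hfar` are the goal at `t = A * B` and `t = -(A * B)`; the goal is affine in `t`.
  have := mul_le_of_abs_le_of_mul_le_of_neg_mul_le (β := u + v - 2 * cR)
    (α := u * A ^ 2 + v * B ^ 2 - cR * (A ^ 2 + B ^ 2)) ht
    (by linear_combination hnear) (by linear_combination hfar)
  linear_combination this

theorem strongMonotonicityConst_mul_le_inner_rpow_smul_sub {E : Type*} [NormedAddCommGroup E]
    [InnerProductSpace ℝ E] {p : ℝ} (hp : 1 < p) (x y : E) :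
    strongMonotonicityConst p * ((‖x‖ ^ 2 + ‖y‖ ^ 2) ^ ((p - 2) / 2) * ‖x - y‖ ^ 2)
      ≤ ⟪‖x‖ ^ (p - 2) • x - ‖y‖ ^ (p - 2) • y, x - y⟫ := by
  wlog hyx : ‖y‖ ≤ ‖x‖ generalizing x y
  · have := this y x (le_of_not_ge hyx)
    rwa [norm_sub_rev, add_comm, ← inner_neg_neg, neg_sub, neg_sub] at this
  have hinner : ⟪‖x‖ ^ (p - 2) • x - ‖y‖ ^ (p - 2) • y, x - y⟫
      = ‖x‖ ^ (p - 2) * (‖x‖ ^ 2 - ⟪x, y⟫) + ‖y‖ ^ (p - 2) * (‖y‖ ^ 2 - ⟪x, y⟫) := by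
    simp only [inner_sub_left, inner_sub_right, real_inner_smul_left, real_inner_self_eq_norm_sq,
      real_inner_comm x y]
    ring
  rw [hinner, norm_sub_sq_real]
  convert strongMonotonicityConst_mul_le_of_abs_le hp (norm_nonneg y) hyx
    (abs_real_inner_le_norm x y) using 3
  ring

theorem stmt7 {N n : ℕ} (F : EuclideanSpace ℝ (Fin N × Fin n) → ℝ)
    (p ℓ : ℝ) (hp : 1 < p) (hℓ : 0 < ℓ)
    (hC1 : ContDiff ℝ 1 F)
    (hconv : ConvexOn ℝ Set.univ (fun ξ => F ξ - ℓ * ‖ξ‖ ^ p)) :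
    ∃ cp : ℝ, 0 < cp ∧ ∀ ξ η : EuclideanSpace ℝ (Fin N × Fin n),
      ⟪gradient F ξ - gradient F η, ξ - η⟫ ≥
        cp * ℓ * ((‖ξ‖ ^ 2 + ‖η‖ ^ 2) ^ ((p - 2) / 2) * ‖ξ - η‖ ^ 2) := by
  refine ⟨p * strongMonotonicityConst p, mul_pos (by linarith) (strongMonotonicityConst_pos hp),
    fun ξ η => ?_⟩
  have hG : ∀ x, HasFDerivAt (fun ξ => F ξ - ℓ * ‖ξ‖ ^ p)
      (fderiv ℝ F x - ℓ • (p * ‖x‖ ^ (p - 2)) • innerSL ℝ x) x := fun x =>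
    (hC1.differentiable one_ne_zero x).hasFDerivAt.sub ((hasFDerivAt_norm_rpow x hp).const_mul ℓ)
  have hmono := hconv.fderiv_sub_fderiv_apply_sub_nonneg trivial trivial (hG ξ) (hG η)
  have hgrad : ⟪gradient F ξ - gradient F η, ξ - η⟫ = (fderiv ℝ F ξ - fderiv ℝ F η) (ξ - η) := by
    simp [gradient, inner_sub_left, InnerProductSpace.toDual_symm_apply]
  have hkey := strongMonotonicityConst_mul_le_inner_rpow_smul_sub hp ξ η
  simp only [sub_apply, smul_apply, innerSL_apply_apply, smul_eq_mul] at hmono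
  rw [inner_sub_left, real_inner_smul_left, real_inner_smul_left] at hkey
  rw [ge_iff_le, hgrad, sub_apply]
  linear_combination (ℓ * p) * hkey + hmono
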